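/- Let A be an abelian group, o ∈ A, S ⊆ A with o ∈ S, and define Sᵢ as above. If every element of A can be written as a finite sum of elements of S plus an integer multiple of o (i.e., S ∪ {o} generates A as a group together with the closure of S under the relation m[s] = [s'] + (m-1)[o]), and Sᵢ satisfies m·Sᵢ ⊆ Sᵢ for all m ∈ ℤ, then ⋃_{i≥0} Sᵢ = A. -/

import Mathlib

/-- The i-th piece of the filtration: sums of i elements of S plus an integer
multiple of o (S₀ = ℤ·o). -/
def filtS {A : Type*} [AddCommGroup A] (S : Set A) (o : A) (i : ℕ) : Set A :=
  {a | ∃ s : Fin i → A, (∀ k, s k ∈ S) ∧ ∃ n : ℤ, a = (∑ k, s k) + n • o}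

/-! Concatenating the sums shows Sᵢ + Sⱼ ⊆ Sᵢ₊ⱼ, so ⋃ᵢ Sᵢ is an additive submonoid; stability under
multiplication by -1 makes it a subgroup, and it contains S ⊆ S₁, hence all of A. -/

section Filtration

variable {A : Type*} [AddCommGroup A] {S : Set A} {o : A}

theorem zsmul_mem_filtS_zero (n : ℤ) : n • o ∈ filtS S o 0 :=
  ⟨finZeroElim, finZeroElim, n, by simp⟩

theorem mem_filtS_one_of_mem {x : A} (hx : x ∈ S) : x ∈ filtS S o 1 :=
  ⟨fun _ => x, fun _ => hx, 0, by simp⟩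

theorem add_mem_filtS_add {x y : A} {i j : ℕ} (hx : x ∈ filtS S o i) (hy : y ∈ filtS S o j) :
    x + y ∈ filtS S o (i + j) := by
  obtain ⟨s, hs, n, rfl⟩ := hx
  obtain ⟨t, ht, m, rfl⟩ := hy
  refine ⟨Fin.append s t, Fin.addCases (by simpa using hs) (by simpa using ht), n + m, ?_⟩
  rw [Fin.sum_univ_add]
  simp only [Fin.append_left, Fin.append_right]
  module

variable (S o) in
def filtSUnion : AddSubmonoid A where
  carrier := ⋃ i, filtS S o i
  zero_mem' := Set.mem_iUnion.2 ⟨0, by simpa using zsmul_mem_filtS_zero (S := S) (o := o) 0⟩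
  add_mem' := by
    rintro x y ⟨_, ⟨i, rfl⟩, hx⟩ ⟨_, ⟨j, rfl⟩, hy⟩
    exact Set.mem_iUnion.2 ⟨i + j, add_mem_filtS_add hx hy⟩

theorem mem_filtSUnion {x : A} : x ∈ filtSUnion S o ↔ ∃ i, x ∈ filtS S o i :=
  Set.mem_iUnion

end Filtration

theorem stmt9_general (A : Type*) [AddCommGroup A] (S : Set A) (o : A)
    (hgen : AddSubgroup.closure S = ⊤)
    (hmul : ∀ (i : ℕ) (α : A), α ∈ filtS S o i → ∀ m : ℤ, m • α ∈ filtS S o i) :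
    (⋃ i : ℕ, filtS S o i) = Set.univ := by
  let H : AddSubgroup A :=
    { filtSUnion S o with
      neg_mem' := fun {x} hx => by
        obtain ⟨i, hi⟩ := mem_filtSUnion.1 hx
        exact mem_filtSUnion.2 ⟨i, by simpa using hmul i x hi (-1)⟩ }
  have hSH : S ⊆ H := fun x hx => mem_filtSUnion.2 ⟨1, mem_filtS_one_of_mem hx⟩
  have hH : H = ⊤ := top_le_iff.1 (hgen ▸ (AddSubgroup.closure_le H).2 hSH)
  exact congrArg SetLike.coe hH

/-- Proposition 1.6(c), abstracted: if S (containing o) generates A as a group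
and each Sᵢ is stable under multiplication by integers, then ⋃ᵢ Sᵢ = A. -/
theorem stmt9 (A : Type*) [AddCommGroup A] (S : Set A) (o : A) (ho : o ∈ S)
    (hgen : AddSubgroup.closure S = ⊤)
    (hmul : ∀ (i : ℕ) (α : A), α ∈ filtS S o i → ∀ m : ℤ, m • α ∈ filtS S o i) :
    (⋃ i : ℕ, filtS S o i) = Set.univ :=
  stmt9_general A S o hgen hmul
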